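/- arXiv:1602.00883 — 7 statements merged into one kernel-verified Lean document; each statement's English description precedes it below -/
import Mathlib

section
/- Let $b_1, b_1', b_2, b_2' \ge 0$ with $b_1' \ge b_1$, $b_2' \ge b_2$, and let $h_1,h_1',h_2,h_2'$ be real fading values, with powers $P_1, P_1', P_2, P_2' \ge 0$. Assume $h_2^2 P_2 + h_1^2 P_1 \ge 2^{2(b_1+b_2)}-1$, $h_2'^2 P_2' + h_1'^2 P_1' \ge 2^{2(b_1'+b_2')}-1$, and $h_2'^2 P_2' + h_1^2 P_1 = 2^{2(b_1+b_2')}-1$. Then $h_2^2 P_2 + h_1'^2 P_1' \ge 2^{2(b_1'+b_2)}-1$. -/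
theorem rate_exchange_feasibility
    (b1 b1' b2 b2' h1 h1' h2 h2' P1 P1' P2 P2' : ℝ)
    (hb1 : 0 ≤ b1) (hb2 : 0 ≤ b2) (hb1' : b1 ≤ b1') (hb2' : b2 ≤ b2')
    (hP1 : 0 ≤ P1) (hP1' : 0 ≤ P1') (hP2 : 0 ≤ P2) (hP2' : 0 ≤ P2')
    (hA : h2 ^ 2 * P2 + h1 ^ 2 * P1 ≥ (2 : ℝ) ^ (2 * (b1 + b2)) - 1)
    (hB : h2' ^ 2 * P2' + h1' ^ 2 * P1' ≥ (2 : ℝ) ^ (2 * (b1' + b2')) - 1)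
    (hC : h2' ^ 2 * P2' + h1 ^ 2 * P1 = (2 : ℝ) ^ (2 * (b1 + b2')) - 1) :
    h2 ^ 2 * P2 + h1' ^ 2 * P1' ≥ (2 : ℝ) ^ (2 * (b1' + b2)) - 1 := by
  have e1 : (2 : ℝ) ^ (2 * (b1 + b2)) = (2:ℝ) ^ (2*b1) * (2:ℝ) ^ (2*b2) := by
    rw [← Real.rpow_add two_pos]; ring_nf
  have e2 : (2 : ℝ) ^ (2 * (b1' + b2')) = (2:ℝ) ^ (2*b1') * (2:ℝ) ^ (2*b2') := by
    rw [← Real.rpow_add two_pos]; ring_nf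
  have e3 : (2 : ℝ) ^ (2 * (b1 + b2')) = (2:ℝ) ^ (2*b1) * (2:ℝ) ^ (2*b2') := by
    rw [← Real.rpow_add two_pos]; ring_nf
  have e4 : (2 : ℝ) ^ (2 * (b1' + b2)) = (2:ℝ) ^ (2*b1') * (2:ℝ) ^ (2*b2) := by
    rw [← Real.rpow_add two_pos]; ring_nf
  have hx : (2:ℝ) ^ (2*b1) ≤ (2:ℝ) ^ (2*b1') :=
    Real.rpow_le_rpow_left_iff (by norm_num) |>.mpr (by linarith)
  have hy : (2:ℝ) ^ (2*b2) ≤ (2:ℝ) ^ (2*b2') :=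
    Real.rpow_le_rpow_left_iff (by norm_num) |>.mpr (by linarith)
  have key : ((2:ℝ) ^ (2*b1') - (2:ℝ) ^ (2*b1)) * ((2:ℝ) ^ (2*b2') - (2:ℝ) ^ (2*b2)) ≥ 0 :=
    mul_nonneg (by linarith) (by linarith)
  nlinarith [key]
end

section
/- Let $b_1(\gamma_{l-1}) \le b_1(\gamma_l)$ and $b_2(\gamma_{l-1}) \le b_2(\gamma_l)$ be nonnegative rates, $h_1(\cdot), h_2(\cdot)$ positive fading values, and suppose powers satisfy: (i) $h_1^2(\gamma_{l-1})P_1(l-1) + h_2^2(\gamma_{l-1})P_2(l-1) = 2^{2(b_1(\gamma_{l-1})+b_2(\gamma_{l-1}))}-1$, (ii) $h_1^2(\gamma_{l-1})P_1(l-1) + h_2^2(\gamma_l)P_2(l) = 2^{2(b_1(\gamma_{l-1})+b_2(\gamma_l))}-1$, (iii) $h_1^2(\gamma_l)P_1(l) + h_2^2(\gamma_l)P_2(l) = 2^{2(b_1(\gamma_l)+b_2(\gamma_l))}-1$, and (iv) the single-user constraint $h_1^2(\gamma_{l-1})P_1(l-1) \ge 2^{2 b_1(\gamma_{l-1})}-1$.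 Then $h_1^2(\gamma_l)P_1(l) \ge 2^{2 b_1(\gamma_l)}-1$. -/
theorem single_user_constraint_inductive_step
    (b1p b1c b2p b2c h1p h1c h2p h2c P1p P1c P2p P2c : ℝ)
    (hb1p : 0 ≤ b1p) (hb2p : 0 ≤ b2p) (hb1 : b1p ≤ b1c) (hb2 : b2p ≤ b2c)
    (hh1p : 0 < h1p) (hh1c : 0 < h1c) (hh2p : 0 < h2p) (hh2c : 0 < h2c)
    (hi : h1p ^ 2 * P1p + h2p ^ 2 * P2p = (2 : ℝ) ^ (2 * (b1p + b2p)) - 1)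
    (hii : h1p ^ 2 * P1p + h2c ^ 2 * P2c = (2 : ℝ) ^ (2 * (b1p + b2c)) - 1)
    (hiii : h1c ^ 2 * P1c + h2c ^ 2 * P2c = (2 : ℝ) ^ (2 * (b1c + b2c)) - 1)
    (hiv : h1p ^ 2 * P1p ≥ (2 : ℝ) ^ (2 * b1p) - 1) :
    h1c ^ 2 * P1c ≥ (2 : ℝ) ^ (2 * b1c) - 1 := by
  have e1 : (2 : ℝ) ^ (2 * (b1p + b2c)) = (2:ℝ) ^ (2*b1p) * (2:ℝ) ^ (2*b2c) := by
    rw [← Real.rpow_add (by norm_num)]; ring_nf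
  have e2 : (2 : ℝ) ^ (2 * (b1c + b2c)) = (2:ℝ) ^ (2*b1c) * (2:ℝ) ^ (2*b2c) := by
    rw [← Real.rpow_add (by norm_num)]; ring_nf
  have hC : (1:ℝ) ≤ (2:ℝ) ^ (2*b2c) := by
    have := Real.one_le_rpow (by norm_num : (1:ℝ) ≤ 2) (by linarith : 0 ≤ 2*b2c)
    linarith
  have hAB : (2:ℝ) ^ (2*b1p) ≤ (2:ℝ) ^ (2*b1c) :=
    Real.rpow_le_rpow_left_iff (by norm_num : (1:ℝ) < 2) |>.mpr (by linarith)
  nlinarith [hii, hiii]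
end

section
/- Suppose three rates satisfy $b_1 = \lambda b_1' + (1-\lambda) b_1''$ with $\lambda \in (0,1)$, $b_1' \le b_1 \le b_1''$, and for some $b_2 \ge 0$ and constants $\alpha_1, \alpha_2 > 0$ the power function $P_1$ satisfies $\alpha_1 P_1(b_1) + \alpha_2 P_2(b_2) = 2^{2(b_1+b_2)}-1$, and for $\tilde b \in \{b_1', b_1''\}$, $\alpha_1 P_1(\tilde b) + \alpha_2 P_2(b_2) \ge 2^{2(\tilde b + b_2)}-1$. Then $P_1(b_1) \le \lambda P_1(b_1') + (1-\lambda) P_1(b_1'')$. -/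
theorem power_allocation_convex_in_rate
    (α1 α2 lam b1 b1' b1'' b2 : ℝ) (P1 : ℝ → ℝ) (P2 : ℝ → ℝ)
    (hα1 : 0 < α1) (hα2 : 0 < α2)
    (hlam : lam ∈ Set.Ioo (0 : ℝ) 1)
    (hb2 : 0 ≤ b2) (hb1' : 0 ≤ b1')
    (hcomb : b1 = lam * b1' + (1 - lam) * b1'')
    (hord1 : b1' ≤ b1) (hord2 : b1 ≤ b1'')
    (heq : α1 * P1 b1 + α2 * P2 b2 = (2 : ℝ) ^ (2 * (b1 + b2)) - 1)
    (hineq : ∀ tb ∈ ({b1', b1''} : Set ℝ),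
      α1 * P1 tb + α2 * P2 b2 ≥ (2 : ℝ) ^ (2 * (tb + b2)) - 1) :
    P1 b1 ≤ lam * P1 b1' + (1 - lam) * P1 b1'' := by
  obtain ⟨hl0, hl1⟩ := hlam
  have h' := hineq b1' (by simp)
  have h'' := hineq b1'' (by simp)
  have hrw : ∀ t : ℝ, (2 : ℝ) ^ t = Real.exp (t * Real.log 2) := fun t => by
    rw [Real.rpow_def_of_pos (by norm_num)]; ring_nf
  have hconv : (2 : ℝ) ^ (2 * (b1 + b2)) ≤
      lam * (2 : ℝ) ^ (2 * (b1' + b2)) + (1 - lam) * (2 : ℝ) ^ (2 * (b1'' + b2)) := by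
    rw [hrw, hrw, hrw]
    have := convexOn_exp.2 (Set.mem_univ (2 * (b1' + b2) * Real.log 2))
      (Set.mem_univ (2 * (b1'' + b2) * Real.log 2)) hl0.le (by linarith : (0:ℝ) ≤ 1 - lam) (by ring : lam + (1 - lam) = 1)
    calc Real.exp (2 * (b1 + b2) * Real.log 2)
        = Real.exp (lam * (2 * (b1' + b2) * Real.log 2)
          + (1 - lam) * (2 * (b1'' + b2) * Real.log 2)) := by rw [hcomb]; ring_nf
      _ ≤ _ := by simpa [smul_eq_mul] using this
  have key : α1 * P1 b1 ≤ α1 * (lam * P1 b1' + (1 - lam) * P1 b1'') := by nlinarith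
  exact le_of_mul_le_mul_left key hα1
end

section
/- Let $\alpha = \alpha_2/\alpha_1 \in (0,1]$ and let $b_1, b_2 : [0,1] \to \mathbb{R}_{\ge 0}$ be nondecreasing quantile functions. Then for any power functions $\hat P_1, \hat P_2 : [0,1] \to \mathbb{R}_{\ge 0}$ satisfying $\alpha_2 \hat P_2(x) \ge 2^{2 b_2(x)} - 1$ for all $x$, and $\alpha_2 \hat P_2(v + 1 - \alpha) + \alpha_1 \hat P_1(v/\alpha) \ge 2^{2(b_2(v+1-\alpha) + b_1(v/\alpha))} - 1$ for $v \in [0,\alpha]$, we have $\int_0^1 \hat P_1(x)\,dx + \int_0^1 \hat P_2(x)\,dx \ge \int_0^{1-\alpha} \frac{2^{2 b_2(x)}-1}{\alpha_2}\,dx + \int_0^{\alpha} \frac{2^{2(b_2(v+1-\alpha)+b_1(v/\alpha))}-1}{\alpha_2}\,dv$. -/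
/-!
Write `a = α₂/α₁ ∈ (0, 1]`. Splitting `∫₀¹ P̂₂` at `1 - a` and substituting `x = v + 1 - a` in the
upper piece and `x = v/a` in `∫₀¹ P̂₁` turns the left-hand side into
`∫₀^{1-a} P̂₂ + ∫₀^a (P̂₂(v + 1 - a) + P̂₁(v/a)/a) dv`. Since `α₂/a = α₁`, the two power
constraints bound these integrands pointwise from below by the integrands of the right-hand side.
-/

open intervalIntegral MeasureTheory

section Rescaling

variable {f g : ℝ → ℝ} {a : ℝ}

theorem integral_comp_div_div_self (f : ℝ → ℝ) (ha : a ≠ 0) :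
    ∫ v in (0:ℝ)..a, f (v / a) / a = ∫ x in (0:ℝ)..1, f x := by
  rw [intervalIntegral.integral_div, intervalIntegral.integral_comp_div _ ha, zero_div,
    div_self ha, smul_eq_mul, mul_div_cancel_left₀ _ ha]

theorem IntervalIntegrable.comp_div_div_self (hf : IntervalIntegrable f volume 0 1) :
    IntervalIntegrable (fun v => f (v / a) / a) volume 0 a := by
  have h := hf.comp_mul_right (c := a⁻¹)
  simp only [zero_div, one_div, inv_inv, ← div_eq_mul_inv] at h
  exact h.div_const a

theorem IntervalIntegrable.comp_add_one_sub (hg : IntervalIntegrable g volume 0 1)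
    (ha0 : 0 ≤ a) (ha1 : a ≤ 1) :
    IntervalIntegrable (fun v => g (v + 1 - a)) volume 0 a := by
  have h : IntervalIntegrable g volume (1 - a) 1 :=
    hg.mono_set (Set.uIcc_subset_uIcc (by simp [Set.uIcc_of_le, ha0, ha1]) (by simp))
  simpa [add_sub_assoc] using h.comp_add_right (1 - a)

theorem integral_eq_integral_add_integral_comp_add_one_sub (hg : IntervalIntegrable g volume 0 1)
    (ha0 : 0 ≤ a) (ha1 : a ≤ 1) :
    ∫ x in (0:ℝ)..1, g x = (∫ x in (0:ℝ)..(1 - a), g x) + ∫ v in (0:ℝ)..a, g (v + 1 - a) := by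
  have hmem : 1 - a ∈ Set.uIcc (0:ℝ) 1 := by simp [Set.uIcc_of_le, ha0, ha1]
  simp_rw [add_sub_assoc]
  rw [intervalIntegral.integral_comp_add_right, zero_add, add_sub_cancel,
    integral_add_adjacent_intervals (hg.mono_set (Set.uIcc_subset_uIcc_left hmem))
      (hg.mono_set (Set.uIcc_subset_uIcc_right hmem))]

theorem integral_add_integral_eq_split_rescale (hf : IntervalIntegrable f volume 0 1)
    (hg : IntervalIntegrable g volume 0 1) (ha0 : 0 < a) (ha1 : a ≤ 1) :
    (∫ x in (0:ℝ)..1, f x) + ∫ x in (0:ℝ)..1, g x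
      = (∫ x in (0:ℝ)..(1 - a), g x) + ∫ v in (0:ℝ)..a, (g (v + 1 - a) + f (v / a) / a) := by
  rw [integral_add (hg.comp_add_one_sub ha0.le ha1) hf.comp_div_div_self,
    integral_comp_div_div_self f ha0.ne', integral_eq_integral_add_integral_comp_add_one_sub hg
      ha0.le ha1]
  ring

end Rescaling

theorem sum_power_lower_bound_general
    (α1 α2 : ℝ) (hα2 : 0 < α2) (hα12 : α2 ≤ α1)
    (b1 b2 P1hat P2hat : ℝ → ℝ)
    (hP1int : IntervalIntegrable P1hat MeasureTheory.volume 0 1)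
    (hP2int : IntervalIntegrable P2hat MeasureTheory.volume 0 1)
    (hRHS1int : IntervalIntegrable (fun x => ((2:ℝ) ^ (2 * b2 x) - 1) / α2)
      MeasureTheory.volume 0 (1 - α2 / α1))
    (hRHS2int : IntervalIntegrable
      (fun v => ((2:ℝ) ^ (2 * (b2 (v + 1 - α2 / α1) + b1 (v / (α2 / α1)))) - 1) / α2)
      MeasureTheory.volume 0 (α2 / α1))
    (hsingle : ∀ x ∈ Set.Icc (0:ℝ) 1, α2 * P2hat x ≥ (2:ℝ) ^ (2 * b2 x) - 1)
    (hjoint : ∀ v ∈ Set.Icc (0:ℝ) (α2 / α1),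
      α2 * P2hat (v + 1 - α2 / α1) + α1 * P1hat (v / (α2 / α1))
        ≥ (2:ℝ) ^ (2 * (b2 (v + 1 - α2 / α1) + b1 (v / (α2 / α1)))) - 1) :
    (∫ x in (0:ℝ)..1, P1hat x) + (∫ x in (0:ℝ)..1, P2hat x)
      ≥ (∫ x in (0:ℝ)..(1 - α2 / α1), ((2:ℝ) ^ (2 * b2 x) - 1) / α2)
        + ∫ v in (0:ℝ)..(α2 / α1),
            ((2:ℝ) ^ (2 * (b2 (v + 1 - α2 / α1) + b1 (v / (α2 / α1)))) - 1) / α2 := by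
  have hα1 : 0 < α1 := hα2.trans_le hα12
  set a := α2 / α1 with ha
  have ha0 : 0 < a := div_pos hα2 hα1
  have ha1 : a ≤ 1 := (div_le_one hα1).2 hα12
  rw [ge_iff_le, integral_add_integral_eq_split_rescale hP1int hP2int ha0 ha1]
  refine add_le_add (integral_mono_on (by linarith) hRHS1int
      (hP2int.mono_set (Set.uIcc_subset_uIcc (by simp) (by simp [Set.uIcc_of_le, ha0.le, ha1])))
      fun x hx => ?_)
    (integral_mono_on ha0.le hRHS2int
      ((hP2int.comp_add_one_sub ha0.le ha1).add hP1int.comp_div_div_self) fun v hv => ?_)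
  · rw [div_le_iff₀' hα2]
    exact hsingle x ⟨hx.1, hx.2.trans (by linarith)⟩
  · have hrescale : α2 * (P1hat (v / a) / a) = α1 * P1hat (v / a) := by
      rw [ha]; field_simp
    rw [div_le_iff₀' hα2, mul_add α2, hrescale]
    exact hjoint v hv

theorem sum_power_lower_bound
    (α1 α2 : ℝ) (hα2 : 0 < α2) (hα12 : α2 ≤ α1)
    (b1 b2 P1hat P2hat : ℝ → ℝ)
    (hb1mono : MonotoneOn b1 (Set.Icc 0 1)) (hb2mono : MonotoneOn b2 (Set.Icc 0 1))
    (hb1nn : ∀ x ∈ Set.Icc (0:ℝ) 1, 0 ≤ b1 x) (hb2nn : ∀ x ∈ Set.Icc (0:ℝ) 1, 0 ≤ b2 x)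
    (hP1nn : ∀ x ∈ Set.Icc (0:ℝ) 1, 0 ≤ P1hat x) (hP2nn : ∀ x ∈ Set.Icc (0:ℝ) 1, 0 ≤ P2hat x)
    (hP1int : IntervalIntegrable P1hat MeasureTheory.volume 0 1)
    (hP2int : IntervalIntegrable P2hat MeasureTheory.volume 0 1)
    (hRHS1int : IntervalIntegrable (fun x => ((2:ℝ) ^ (2 * b2 x) - 1) / α2)
      MeasureTheory.volume 0 (1 - α2 / α1))
    (hRHS2int : IntervalIntegrable
      (fun v => ((2:ℝ) ^ (2 * (b2 (v + 1 - α2 / α1) + b1 (v / (α2 / α1)))) - 1) / α2)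
      MeasureTheory.volume 0 (α2 / α1))
    (hsingle : ∀ x ∈ Set.Icc (0:ℝ) 1, α2 * P2hat x ≥ (2:ℝ) ^ (2 * b2 x) - 1)
    (hjoint : ∀ v ∈ Set.Icc (0:ℝ) (α2 / α1),
      α2 * P2hat (v + 1 - α2 / α1) + α1 * P1hat (v / (α2 / α1))
        ≥ (2:ℝ) ^ (2 * (b2 (v + 1 - α2 / α1) + b1 (v / (α2 / α1)))) - 1) :
    (∫ x in (0:ℝ)..1, P1hat x) + (∫ x in (0:ℝ)..1, P2hat x)
      ≥ (∫ x in (0:ℝ)..(1 - α2 / α1), ((2:ℝ) ^ (2 * b2 x) - 1) / α2)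
        + ∫ v in (0:ℝ)..(α2 / α1),
            ((2:ℝ) ^ (2 * (b2 (v + 1 - α2 / α1) + b1 (v / (α2 / α1)))) - 1) / α2 :=
  sum_power_lower_bound_general α1 α2 hα2 hα12 b1 b2 P1hat P2hat hP1int hP2int hRHS1int hRHS2int
    hsingle hjoint
end

section
/- For $\alpha_1 \ge \alpha_2 > 0$ and nonnegative rates $r_1, r_2$, if transmit powers $P_1, P_2 \ge 0$ satisfy $\alpha_1 P_1 \ge 2^{2r_1}-1$, $\alpha_2 P_2 \ge 2^{2r_2}-1$, and $\alpha_1 P_1 + \alpha_2 P_2 \ge 2^{2(r_1+r_2)}-1$, then the minimum of $P_1 + P_2$ over such feasible pairs is attained at a point with $\alpha_1 P_1 + \alpha_2 P_2 = 2^{2(r_1+r_2)}-1$ and $\alpha_2 P_2 = 2^{2 r_2}-1$ (when $\alpha_1 \ge \alpha_2$), giving minimal sum-power $\frac{2^{2r_2}-1}{\alpha_2} + \frac{2^{2(r_1+r_2)} - 2^{2 r_2}}{\alpha_1}$. -/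
theorem centralized_optimal_power (α1 α2 r1 r2 : ℝ)
    (hα2 : 0 < α2) (hα12 : α2 ≤ α1) (hr1 : 0 ≤ r1) (hr2 : 0 ≤ r2) :
    IsLeast
      { s : ℝ | ∃ P1 P2 : ℝ, 0 ≤ P1 ∧ 0 ≤ P2 ∧
          α1 * P1 ≥ (2:ℝ) ^ (2 * r1) - 1 ∧
          α2 * P2 ≥ (2:ℝ) ^ (2 * r2) - 1 ∧
          α1 * P1 + α2 * P2 ≥ (2:ℝ) ^ (2 * (r1 + r2)) - 1 ∧
          s = P1 + P2 }
      (((2:ℝ) ^ (2 * r2) - 1) / α2 + ((2:ℝ) ^ (2 * (r1 + r2)) - (2:ℝ) ^ (2 * r2)) / α1)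
    ∧ (let P2 := ((2:ℝ) ^ (2 * r2) - 1) / α2
       let P1 := ((2:ℝ) ^ (2 * (r1 + r2)) - (2:ℝ) ^ (2 * r2)) / α1
       α2 * P2 = (2:ℝ) ^ (2 * r2) - 1 ∧
       α1 * P1 + α2 * P2 = (2:ℝ) ^ (2 * (r1 + r2)) - 1) := by
  have hα1 : 0 < α1 := lt_of_lt_of_le hα2 hα12
  set A : ℝ := (2:ℝ) ^ (2 * r1) with hA
  set B : ℝ := (2:ℝ) ^ (2 * r2) with hB
  set C : ℝ := (2:ℝ) ^ (2 * (r1 + r2)) with hC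
  have hA1 : 1 ≤ A := by
    have : (2:ℝ) ^ (0:ℝ) ≤ (2:ℝ) ^ (2 * r1) :=
      Real.rpow_le_rpow_of_exponent_le (by norm_num) (by linarith)
    simpa using this
  have hB1 : 1 ≤ B := by
    have : (2:ℝ) ^ (0:ℝ) ≤ (2:ℝ) ^ (2 * r2) :=
      Real.rpow_le_rpow_of_exponent_le (by norm_num) (by linarith)
    simpa using this
  have hCAB : C = A * B := by
    rw [hA, hB, hC, ← Real.rpow_add (by norm_num)]
    ring_nf
  have hCB : B ≤ C := by
    rw [hCAB]; nlinarith
  have hCA : A ≤ C := by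
    rw [hCAB]; nlinarith
  refine ⟨⟨⟨(C - B) / α1, (B - 1) / α2, ?_, ?_, ?_, ?_, ?_, by ring⟩, ?_⟩, ?_, ?_⟩
  · exact div_nonneg (by linarith) hα1.le
  · exact div_nonneg (by linarith) hα2.le
  · rw [mul_div_cancel₀ _ hα1.ne']
    rw [hCAB]; nlinarith
  · rw [mul_div_cancel₀ _ hα2.ne']
  · rw [mul_div_cancel₀ _ hα1.ne', mul_div_cancel₀ _ hα2.ne']
    linarith
  · rintro s ⟨P1, P2, hP1, hP2, h1, h2, h3, rfl⟩
    rw [div_add_div _ _ hα2.ne' hα1.ne', div_le_iff₀ (by positivity)]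
    nlinarith [mul_le_mul_of_nonneg_left h3 hα2.le,
      mul_le_mul_of_nonneg_left h2 (sub_nonneg.2 hα12)]
  · exact mul_div_cancel₀ _ hα2.ne'
  · rw [mul_div_cancel₀ _ hα1.ne', mul_div_cancel₀ _ hα2.ne']
    ring
end

section
/- Let $b_1, b_2 \ge 0$ and $b_1' \ge b_1$. If $h_2^2 P_2(b_2) + h_1^2 P_1(b_1) \ge 2^{2(b_1+b_2)}-1$ where equality need not hold, and the induction hypothesis holds for the predecessor index, then by induction on the pseudo-CDF index $l_1 > l_2$, every cross rate-pair $(b_1(\gamma_{l_1}), b_2(\gamma_{l_2}))$ satisfies $h_1^2(\gamma_{l_1})P_1(l_1) + h_2^2(\gamma_{l_2})P_2(l_2) \ge 2^{2(b_1(\gamma_{l_1})+b_2(\gamma_{l_2}))}-1$. -/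
lemma rpow_cross_key (x x' y y' : ℝ) (hx : x ≤ x') (hy : y ≤ y') :
    (2:ℝ) ^ (2*(x'+y)) - (2:ℝ) ^ (2*(x+y)) ≤
      (2:ℝ) ^ (2*(x'+y')) - (2:ℝ) ^ (2*(x+y')) := by
  have e : ∀ a b : ℝ, (2:ℝ)^(2*(a+b)) = (2:ℝ)^(2*a) * (2:ℝ)^(2*b) := by
    intro a b
    rw [← Real.rpow_add two_pos]
    ring_nf
  rw [e, e, e, e]
  have hxx : (2:ℝ)^(2*x) ≤ (2:ℝ)^(2*x') :=
    Real.rpow_le_rpow_of_exponent_le one_le_two (by linarith)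
  have hyy : (2:ℝ)^(2*y) ≤ (2:ℝ)^(2*y') :=
    Real.rpow_le_rpow_of_exponent_le one_le_two (by linarith)
  nlinarith [hxx, hyy]

theorem iterative_allocation_outage_free (γ b1 b2 h1 h2 P1 P2 : ℕ → ℝ)
    (hb1mono : Monotone b1) (hb2mono : Monotone b2)
    (hb1nn : ∀ l, 0 ≤ b1 l) (hb2nn : ∀ l, 0 ≤ b2 l)
    (hdiag : ∀ l,
      h1 l ^ 2 * P1 l + h2 l ^ 2 * P2 l = (2:ℝ) ^ (2 * (b1 l + b2 l)) - 1)
    (hfwd : ∀ l,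
      h1 l ^ 2 * P1 l + h2 (l + 1) ^ 2 * P2 (l + 1)
        = (2:ℝ) ^ (2 * (b1 l + b2 (l + 1))) - 1)
    (hinit1 : h1 0 ^ 2 * P1 0 ≥ (2:ℝ) ^ (2 * b1 0) - 1)
    (hinit2 : h2 0 ^ 2 * P2 0 ≥ (2:ℝ) ^ (2 * b2 0) - 1) :
    ∀ l1 l2 : ℕ, l2 ≤ l1 →
      h1 l1 ^ 2 * P1 l1 + h2 l2 ^ 2 * P2 l2
        ≥ (2:ℝ) ^ (2 * (b1 l1 + b2 l2)) - 1 := by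
  intro l1
  induction l1 with
  | zero =>
    intro l2 hle
    interval_cases l2
    exact ge_of_eq (hdiag 0)
  | succ n ih =>
    intro l2 hle
    rcases eq_or_lt_of_le hle with heq | hlt
    · subst heq
      exact ge_of_eq (hdiag _)
    · have h2le : l2 ≤ n := Nat.lt_succ_iff.mp hlt
      have IH := ih l2 h2le
      have hd := hdiag (n + 1)
      have hf := hfwd n
      have key := rpow_cross_key (b1 n) (b1 (n+1)) (b2 l2) (b2 (n+1))
        (hb1mono (Nat.le_succ n)) (hb2mono (le_trans h2le (Nat.le_succ n)))
      linarith
end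

section
/- For a two-user MAC with fading power gains $\alpha_1 \ge \alpha_2 > 0$ and nondecreasing quantile functions $b_1, b_2$ of the users' rate distributions, the minimum average sum-power under unit delay satisfies $P^{min}_{avg}(1) = \int_0^{1-\alpha_2/\alpha_1} \frac{2^{2 b_2(x)}-1}{\alpha_2}\,dx + \int_0^{\alpha_2/\alpha_1} \frac{2^{2(b_2(v+1-\alpha_2/\alpha_1) + b_1(\alpha_1 v/\alpha_2))}-1}{\alpha_2}\,dv$, i.e., this value is both a lower bound on the average sum-power of any outage-free allocation and is achieved by some outage-free allocation. -/
/-!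
Write `c = α₂ / α₁` and pair user 1's quantile `x` with user 2's quantile `1 - c + c x`. After the
substitution `v = c x` the average sum-power becomes `∫₀^{1-c} P₂ ∘ b₂` plus the integral over
`v ∈ [0, c]` of `(α₁ P₁ + α₂ P₂) / α₂` at paired quantiles, and the outage constraints bound both
integrands below by those of the claimed value.

For achievability let `G = 2 ^ (2 b₁)` and `n x = 2 ^ (2 b₂ (1 - c + c x))`, both nondecreasing.
Take `α₁ P₁ = u` with `u x = n 0 (G 0 - 1) + ∫₀ˣ n dG`, and `α₂ P₂` at rate `r` the conjugate
`max (2^{2r} - 1) (sup_x (2^{2r} G x - 1 - u x))`. Since `n` is nondecreasing, `x` maximises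
`n x * G - u`, so the joint constraint is tight at paired quantiles, and user 2's own constraint is
tight below `1 - c`.
-/

open MeasureTheory Set

noncomputable section

section LowerStieltjes

variable {n G : ℝ → ℝ}

-- `G` may jump, so the Stieltjes integral is taken as a supremum of left-endpoint sums.
def stieltjesLeftSums (n G : ℝ → ℝ) (x : ℝ) : Set ℝ :=
  {v | ∃ (k : ℕ) (t : ℕ → ℝ), Monotone t ∧ t 0 = 0 ∧ t k = x ∧
    v = ∑ i ∈ Finset.range k, n (t i) * (G (t (i + 1)) - G (t i))}

def lowerStieltjesIntegral (n G : ℝ → ℝ) (x : ℝ) : ℝ :=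
  sSup (stieltjesLeftSums n G x)

lemma mul_sub_mem_stieltjesLeftSums {x : ℝ} (hx : 0 ≤ x) :
    n 0 * (G x - G 0) ∈ stieltjesLeftSums n G x := by
  refine ⟨1, fun i => if i = 0 then 0 else x, monotone_nat_of_le_succ fun i => ?_,
    by simp, by simp, by simp⟩
  split_ifs <;> simp_all

lemma add_mul_sub_mem_stieltjesLeftSums {x x' v : ℝ} (hxx : x ≤ x')
    (hv : v ∈ stieltjesLeftSums n G x) :
    v + n x * (G x' - G x) ∈ stieltjesLeftSums n G x' := by
  obtain ⟨k, t, ht, ht0, htk, rfl⟩ := hv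
  refine ⟨k + 1, fun i => if i ≤ k then t i else x', monotone_nat_of_le_succ fun i => ?_,
    by simp [ht0], by simp, ?_⟩
  · rcases lt_trichotomy i k with h | rfl | h
    · simp [h.le, Nat.succ_le_of_lt h, ht (Nat.le_succ i)]
    · simp [htk, hxx]
    · simp [h.not_ge, (h.trans (Nat.lt_succ_self i)).not_ge]
  · rw [Finset.sum_range_succ]
    congr 1
    · refine Finset.sum_congr rfl fun i hi => ?_
      have hi : i < k := Finset.mem_range.mp hi
      simp [hi.le, Nat.succ_le_of_lt hi]
    · simp [htk]

variable (hn : MonotoneOn n (Icc 0 1)) (hG : MonotoneOn G (Icc 0 1))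
include hn hG

lemma le_of_mem_stieltjesLeftSums {x v : ℝ} (hx : x ≤ 1) (hv : v ∈ stieltjesLeftSums n G x) :
    v ≤ n x * (G x - G 0) := by
  obtain ⟨k, t, ht, ht0, htk, rfl⟩ := hv
  have hmem : ∀ i ≤ k, t i ∈ Icc (0:ℝ) 1 := fun i hi =>
    ⟨ht0 ▸ ht (Nat.zero_le i), (htk ▸ ht hi).trans hx⟩
  have hxmem : x ∈ Icc (0:ℝ) 1 := htk ▸ hmem k le_rfl
  calc ∑ i ∈ Finset.range k, n (t i) * (G (t (i + 1)) - G (t i))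
      ≤ ∑ i ∈ Finset.range k, n x * (G (t (i + 1)) - G (t i)) := by
        refine Finset.sum_le_sum fun i hi => ?_
        have hi : i < k := Finset.mem_range.mp hi
        refine mul_le_mul_of_nonneg_right (hn (hmem i hi.le) hxmem (htk ▸ ht hi.le)) ?_
        exact sub_nonneg.mpr (hG (hmem i hi.le) (hmem (i + 1) hi) (ht (Nat.le_succ i)))
    _ = n x * (G x - G 0) := by
        rw [← Finset.mul_sum, Finset.sum_range_sub (fun i => G (t i)), htk, ht0]

lemma exists_mem_stieltjesLeftSums_le_add {x x' v : ℝ} (hx : 0 ≤ x) (hxx : x ≤ x')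
    (hx' : x' ≤ 1) (hv : v ∈ stieltjesLeftSums n G x') :
    ∃ v' ∈ stieltjesLeftSums n G x, v ≤ v' + n x' * (G x' - G x) := by
  obtain ⟨k, t, ht, ht0, htk, rfl⟩ := hv
  set s : ℕ → ℝ := fun i => min (t i) x
  have hmem : ∀ i ≤ k, t i ∈ Icc (0:ℝ) 1 := fun i hi =>
    ⟨ht0 ▸ ht (Nat.zero_le i), (htk ▸ ht hi).trans hx'⟩
  have hsmem : ∀ i, s i ∈ Icc (0:ℝ) 1 := fun i =>
    ⟨le_min (ht0 ▸ ht (Nat.zero_le i)) hx, (min_le_right _ _).trans (hxx.trans hx')⟩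
  have hx'mem : x' ∈ Icc (0:ℝ) 1 := htk ▸ hmem k le_rfl
  -- Clipping the partition at x loses at most `n x'` times the increment of `G` beyond `x`.
  have hterm : ∀ i < k, n (t i) * (G (t (i + 1)) - G (t i)) ≤
      n (s i) * (G (s (i + 1)) - G (s i)) +
        n x' * ((G (t (i + 1)) - G (s (i + 1))) - (G (t i) - G (s i))) := by
    intro i hi
    have hni : n (t i) ≤ n x' := hn (hmem i hi.le) hx'mem (htk ▸ ht hi.le)
    by_cases hc : t i ≤ x
    · have hs : s i = t i := min_eq_left hc
      have hGs : G (s (i + 1)) ≤ G (t (i + 1)) := hG (hsmem _) (hmem _ hi) (min_le_left _ _)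
      rw [hs]
      nlinarith
    · have hs : s i = x := min_eq_right (not_le.mp hc).le
      have hs' : s (i + 1) = x := min_eq_right ((not_le.mp hc).le.trans (ht (Nat.le_succ i)))
      have hGt : G (t i) ≤ G (t (i + 1)) := hG (hmem _ hi.le) (hmem _ hi) (ht (Nat.le_succ i))
      rw [hs, hs']
      nlinarith
  refine ⟨_, ⟨k, s, fun i j hij => min_le_min_right x (ht hij), by simp [s, ht0, hx],
    by simp [s, htk, hxx], rfl⟩, ?_⟩
  calc ∑ i ∈ Finset.range k, n (t i) * (G (t (i + 1)) - G (t i))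
      ≤ ∑ i ∈ Finset.range k, (n (s i) * (G (s (i + 1)) - G (s i)) +
          n x' * ((G (t (i + 1)) - G (s (i + 1))) - (G (t i) - G (s i)))) :=
        Finset.sum_le_sum fun i hi => hterm i (Finset.mem_range.mp hi)
    _ = _ := by
        rw [Finset.sum_add_distrib, ← Finset.mul_sum,
          Finset.sum_range_sub (fun i => G (t i) - G (s i))]
        simp [s, htk, ht0, hx, hxx]

lemma bddAbove_stieltjesLeftSums {x : ℝ} (hx : x ≤ 1) : BddAbove (stieltjesLeftSums n G x) :=
  ⟨_, fun _ => le_of_mem_stieltjesLeftSums hn hG hx⟩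

lemma lowerStieltjesIntegral_zero :
    lowerStieltjesIntegral n G 0 = 0 :=
  le_antisymm
    (csSup_le ⟨_, mul_sub_mem_stieltjesLeftSums le_rfl⟩ fun _ hv => by
      simpa using le_of_mem_stieltjesLeftSums hn hG zero_le_one hv)
    (le_csSup (bddAbove_stieltjesLeftSums hn hG zero_le_one) (by
      simpa using mul_sub_mem_stieltjesLeftSums (n := n) (G := G) le_rfl))

lemma lowerStieltjesIntegral_add_mul_sub_le {x x' : ℝ} (hx : 0 ≤ x) (hxx : x ≤ x') (hx' : x' ≤ 1) :
    lowerStieltjesIntegral n G x + n x * (G x' - G x) ≤ lowerStieltjesIntegral n G x' := by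
  rw [← le_sub_iff_add_le]
  exact csSup_le ⟨_, mul_sub_mem_stieltjesLeftSums hx⟩ fun v hv => le_sub_iff_add_le.mpr <|
    le_csSup (bddAbove_stieltjesLeftSums hn hG hx') (add_mul_sub_mem_stieltjesLeftSums hxx hv)

lemma lowerStieltjesIntegral_le_add_mul_sub {x x' : ℝ} (hx : 0 ≤ x) (hxx : x ≤ x') (hx' : x' ≤ 1) :
    lowerStieltjesIntegral n G x' ≤ lowerStieltjesIntegral n G x + n x' * (G x' - G x) :=
  csSup_le ⟨_, mul_sub_mem_stieltjesLeftSums (hx.trans hxx)⟩ fun v hv => by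
    obtain ⟨v', hv', hle⟩ := exists_mem_stieltjesLeftSums_le_add hn hG hx hxx hx' hv
    have : v' ≤ lowerStieltjesIntegral n G x :=
      le_csSup (bddAbove_stieltjesLeftSums hn hG (hxx.trans hx')) hv'
    linarith

end LowerStieltjes

section OptimalPowers

variable {n G : ℝ → ℝ}

-- `optPower₁ n G x` is the received power `α₁ P₁` at user 1's quantile `x`, and
-- `optPower₂ n G m` is `α₂ P₂` at user 2's rate `r`, where `m = 2 ^ (2 r)`.
def optPower₁ (n G : ℝ → ℝ) (x : ℝ) : ℝ :=
  n 0 * (G 0 - 1) + lowerStieltjesIntegral n G x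

def optPower₂ (n G : ℝ → ℝ) (m : ℝ) : ℝ :=
  max (m - 1) (⨆ x : Icc (0:ℝ) 1, m * G x - 1 - optPower₁ n G x)

variable (hn : MonotoneOn n (Icc 0 1)) (hG : MonotoneOn G (Icc 0 1))
include hn hG

lemma optPower₁_zero : optPower₁ n G 0 = n 0 * (G 0 - 1) := by
  simp [optPower₁, lowerStieltjesIntegral_zero hn hG]

lemma mul_sub_optPower₁_le {x x' : ℝ} (hx : x ∈ Icc (0:ℝ) 1) (hx' : x' ∈ Icc (0:ℝ) 1) :
    n x * G x' - optPower₁ n G x' ≤ n x * G x - optPower₁ n G x := by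
  unfold optPower₁
  rcases le_total x x' with h | h
  · linarith [lowerStieltjesIntegral_add_mul_sub_le hn hG hx.1 h hx'.2]
  · linarith [lowerStieltjesIntegral_le_add_mul_sub hn hG hx'.1 h hx.2]

lemma mul_sub_one_le_optPower₁ {x : ℝ} (hx : x ∈ Icc (0:ℝ) 1) :
    n 0 * (G x - 1) ≤ optPower₁ n G x := by
  linarith [mul_sub_optPower₁_le hn hG (left_mem_Icc.mpr zero_le_one) hx, optPower₁_zero hn hG]

lemma optPower₁_le_mul_sub_one (hG0 : 1 ≤ G 0) {x : ℝ} (hx : x ∈ Icc (0:ℝ) 1) :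
    optPower₁ n G x ≤ n x * (G x - 1) := by
  have h0 : (0:ℝ) ∈ Icc (0:ℝ) 1 := left_mem_Icc.mpr zero_le_one
  nlinarith [mul_sub_optPower₁_le hn hG hx h0, optPower₁_zero hn hG, hn h0 hx hx.1]

lemma optPower₁_eq_of_eq {x x' : ℝ} (hx : x ∈ Icc (0:ℝ) 1) (hx' : x' ∈ Icc (0:ℝ) 1)
    (h : G x = G x') : optPower₁ n G x = optPower₁ n G x' := by
  have h₁ := mul_sub_optPower₁_le hn hG hx hx'
  have h₂ := mul_sub_optPower₁_le hn hG hx' hx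
  rw [h] at h₁ h₂
  linarith

lemma optPower₁_monotoneOn (hn0 : 0 ≤ n 0) : MonotoneOn (optPower₁ n G) (Icc 0 1) := by
  intro x hx x' hx' h
  have hnx : 0 ≤ n x := hn0.trans (hn (left_mem_Icc.mpr zero_le_one) hx hx.1)
  nlinarith [mul_sub_optPower₁_le hn hG hx hx', hG hx hx' h]

lemma bddAbove_range_mul_sub_optPower₁ (hn0 : 0 ≤ n 0) (hG0 : 1 ≤ G 0) (m : ℝ) :
    BddAbove (range fun x : Icc (0:ℝ) 1 => m * G x - 1 - optPower₁ n G x) := by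
  refine ⟨|m| * G 1, ?_⟩
  rintro _ ⟨⟨x, hx⟩, rfl⟩
  have hGx : G 0 ≤ G x := hG (left_mem_Icc.mpr zero_le_one) hx hx.1
  have hG1 : G x ≤ G 1 := hG hx (right_mem_Icc.mpr zero_le_one) hx.2
  have hu := mul_sub_one_le_optPower₁ hn hG hx
  have hm : m * G x ≤ |m| * G 1 :=
    (mul_le_mul_of_nonneg_right (le_abs_self m) (by linarith)).trans
      (mul_le_mul_of_nonneg_left hG1 (abs_nonneg m))
  dsimp only
  nlinarith

lemma mul_sub_one_le_optPower₁_add_optPower₂ (hn0 : 0 ≤ n 0) (hG0 : 1 ≤ G 0) {x : ℝ}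
    (hx : x ∈ Icc (0:ℝ) 1) (m : ℝ) : m * G x - 1 ≤ optPower₁ n G x + optPower₂ n G m := by
  have := le_ciSup (bddAbove_range_mul_sub_optPower₁ hn hG hn0 hG0 m) ⟨x, hx⟩
  have := le_max_right (m - 1) (⨆ x : Icc (0:ℝ) 1, m * G x - 1 - optPower₁ n G x)
  unfold optPower₂
  linarith

lemma optPower₂_monotone (hn0 : 0 ≤ n 0) (hG0 : 1 ≤ G 0) : Monotone (optPower₂ n G) :=
  fun m m' h => max_le_max (by linarith) <|
    ciSup_mono (bddAbove_range_mul_sub_optPower₁ hn hG hn0 hG0 m') fun x => by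
      have : 0 ≤ G x := zero_le_one.trans (hG0.trans (hG (left_mem_Icc.mpr zero_le_one) x.2 x.2.1))
      nlinarith

lemma optPower₂_eq_sub_one (hG0 : 1 ≤ G 0) {m : ℝ} (hm : m ≤ n 0) : optPower₂ n G m = m - 1 :=
  max_eq_left <| ciSup_le fun x => by
    have : 1 ≤ G x := hG0.trans (hG (left_mem_Icc.mpr zero_le_one) x.2 x.2.1)
    nlinarith [mul_sub_one_le_optPower₁ hn hG x.2]

lemma optPower₁_add_optPower₂_self (hn0 : 0 ≤ n 0) (hG0 : 1 ≤ G 0) {x : ℝ}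
    (hx : x ∈ Icc (0:ℝ) 1) : optPower₁ n G x + optPower₂ n G (n x) = n x * G x - 1 := by
  have hsup : (⨆ x' : Icc (0:ℝ) 1, n x * G x' - 1 - optPower₁ n G x') =
      n x * G x - 1 - optPower₁ n G x :=
    le_antisymm (ciSup_le fun x' => by linarith [mul_sub_optPower₁_le hn hG hx x'.2])
      (le_ciSup (bddAbove_range_mul_sub_optPower₁ hn hG hn0 hG0 (n x)) ⟨x, hx⟩)
  have hle : n x - 1 ≤ n x * G x - 1 - optPower₁ n G x := by
    linarith [optPower₁_le_mul_sub_one hn hG hG0 hx]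
  rw [optPower₂, hsup, max_eq_right hle]
  ring

end OptimalPowers

lemma two_rpow_two_mul_add (a b : ℝ) :
    (2:ℝ) ^ (2 * (a + b)) = (2:ℝ) ^ (2 * a) * (2:ℝ) ^ (2 * b) := by
  rw [← Real.rpow_add two_pos, mul_add]

lemma monotoneOn_two_rpow_two_mul {s : Set ℝ} {b : ℝ → ℝ} (hb : MonotoneOn b s) :
    MonotoneOn (fun x => (2:ℝ) ^ (2 * b x)) s := fun x hx x' hx' h =>
  Real.rpow_le_rpow_of_exponent_le one_le_two (by linarith [hb hx hx' h])

lemma exists_eq_comp_of_factorsThrough_on {α β γ : Type*} [Nonempty γ] {s : Set α} {b : α → β}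
    {g : α → γ} (h : ∀ x ∈ s, ∀ x' ∈ s, b x = b x' → g x = g x') :
    ∃ q : β → γ, ∀ x ∈ s, q (b x) = g x := by
  have hfac : Function.FactorsThrough (fun x : s => g x) (fun x : s => b x) := fun a a' =>
    h a a.2 a' a'.2
  exact ⟨_, fun x hx => hfac.extend_apply (fun _ => Classical.ofNonempty) ⟨x, hx⟩⟩

lemma exists_receivedPowers_tight {c : ℝ} (hc0 : 0 < c) (hc1 : c ≤ 1) {b1 b2 : ℝ → ℝ}
    (hb1 : MonotoneOn b1 (Icc 0 1)) (hb2 : MonotoneOn b2 (Icc 0 1))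
    (hb1nn : ∀ x ∈ Icc (0:ℝ) 1, 0 ≤ b1 x) (hb2nn : ∀ y ∈ Icc (0:ℝ) 1, 0 ≤ b2 y) :
    ∃ q1 q2 : ℝ → ℝ,
      IntervalIntegrable (fun x => q1 (b1 x)) volume 0 1 ∧
      IntervalIntegrable (fun y => q2 (b2 y)) volume 0 1 ∧
      (∀ x ∈ Icc (0:ℝ) 1, (2:ℝ) ^ (2 * b1 x) - 1 ≤ q1 (b1 x)) ∧
      (∀ y ∈ Icc (0:ℝ) 1, (2:ℝ) ^ (2 * b2 y) - 1 ≤ q2 (b2 y)) ∧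
      (∀ x ∈ Icc (0:ℝ) 1, ∀ y ∈ Icc (0:ℝ) 1,
        (2:ℝ) ^ (2 * (b1 x + b2 y)) - 1 ≤ q1 (b1 x) + q2 (b2 y)) ∧
      (∀ y ∈ Icc 0 (1 - c), q2 (b2 y) = (2:ℝ) ^ (2 * b2 y) - 1) ∧
      (∀ x ∈ Icc (0:ℝ) 1,
        q1 (b1 x) + q2 (b2 (c * x + (1 - c))) =
          (2:ℝ) ^ (2 * (b1 x + b2 (c * x + (1 - c)))) - 1) := by
  have hpair : MapsTo (fun x => c * x + (1 - c)) (Icc 0 1) (Icc 0 1) := fun x hx =>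
    ⟨by nlinarith [hx.1], by nlinarith [hx.2]⟩
  set G : ℝ → ℝ := fun x => (2:ℝ) ^ (2 * b1 x)
  set n : ℝ → ℝ := fun x => (2:ℝ) ^ (2 * b2 (c * x + (1 - c)))
  have hG : MonotoneOn G (Icc 0 1) := monotoneOn_two_rpow_two_mul hb1
  have hn : MonotoneOn n (Icc 0 1) := monotoneOn_two_rpow_two_mul
    (hb2.comp (fun x _ x' _ h => by nlinarith) hpair)
  have h0 : (0:ℝ) ∈ Icc (0:ℝ) 1 := left_mem_Icc.mpr zero_le_one
  have hG1 : ∀ x ∈ Icc (0:ℝ) 1, 1 ≤ G x := fun x hx =>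
    Real.one_le_rpow one_le_two (by linarith [hb1nn x hx])
  have hn1 : 1 ≤ n 0 := Real.one_le_rpow one_le_two (by linarith [hb2nn _ (hpair h0)])
  have hn0 : 0 ≤ n 0 := zero_le_one.trans hn1
  obtain ⟨q1, hq1⟩ := exists_eq_comp_of_factorsThrough_on (s := Icc (0:ℝ) 1) (b := b1)
    (g := optPower₁ n G) fun x hx x' hx' h => optPower₁_eq_of_eq hn hG hx hx' (by simp only [G, h])
  have hq1mono : MonotoneOn (fun x => q1 (b1 x)) (uIcc 0 1) := by
    rw [uIcc_of_le zero_le_one]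
    exact (optPower₁_monotoneOn hn hG hn0).congr fun x hx => (hq1 x hx).symm
  have hq2mono : MonotoneOn (fun y => optPower₂ n G ((2:ℝ) ^ (2 * b2 y))) (uIcc 0 1) := by
    rw [uIcc_of_le zero_le_one]
    exact (optPower₂_monotone hn hG hn0 (hG1 0 h0)).comp_monotoneOn
      (monotoneOn_two_rpow_two_mul hb2)
  refine ⟨q1, fun r => optPower₂ n G ((2:ℝ) ^ (2 * r)), hq1mono.intervalIntegrable,
    hq2mono.intervalIntegrable, fun x hx => ?_, fun y _ => le_max_left _ _,
    fun x hx y _ => ?_, fun y hy => ?_, fun x hx => ?_⟩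
  · rw [hq1 x hx]
    nlinarith [mul_sub_one_le_optPower₁ hn hG hx, hG1 x hx, hn1]
  · rw [hq1 x hx, two_rpow_two_mul_add, mul_comm]
    exact mul_sub_one_le_optPower₁_add_optPower₂ hn hG hn0 (hG1 0 h0) hx _
  · exact optPower₂_eq_sub_one hn hG (hG1 0 h0) (monotoneOn_two_rpow_two_mul hb2
      ⟨hy.1, by linarith [hy.2]⟩ (hpair h0) (by linarith [hy.2]))
  · rw [hq1 x hx, two_rpow_two_mul_add]
    show optPower₁ n G x + optPower₂ n G (n x) = G x * n x - 1
    rw [mul_comm]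
    exact optPower₁_add_optPower₂_self hn hG hn0 (hG1 0 h0) hx

section Pairing

variable {α1 α2 : ℝ} {p1 p2 : ℝ → ℝ}

lemma IntervalIntegrable.comp_mul_div (hp : IntervalIntegrable p1 volume 0 1) (a b : ℝ) :
    IntervalIntegrable (fun v => p1 (a * v / b)) volume 0 (b / a) := by
  have := hp.comp_mul_left (c := a / b)
  simp only [zero_div, one_div, inv_div] at this
  simpa only [div_mul_eq_mul_div] using this

lemma IntervalIntegrable.comp_add_one_sub_s19 (hp : IntervalIntegrable p1 volume 0 1) {c : ℝ}
    (hc0 : 0 ≤ c) (hc1 : c ≤ 1) :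
    IntervalIntegrable (fun v => p1 (v + 1 - c)) volume 0 c := by
  have := hp.comp_add_right (1 - c)
  simp only [zero_sub, neg_sub, sub_sub_cancel] at this
  have h0 : (0:ℝ) ∈ uIcc (c - 1) c := Icc_subset_uIcc ⟨by linarith, hc0⟩
  simpa only [add_sub_assoc] using this.mono_set (uIcc_subset_uIcc h0 right_mem_uIcc)

def pairedPower (α1 α2 : ℝ) (p1 p2 : ℝ → ℝ) (v : ℝ) : ℝ :=
  (α1 * p1 (α1 * v / α2) + α2 * p2 (v + 1 - α2 / α1)) / α2

lemma pairing_mem_Icc (hα2 : 0 < α2) (hα12 : α2 ≤ α1) {v : ℝ} (hv : v ∈ Icc 0 (α2 / α1)) :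
    α1 * v / α2 ∈ Icc (0:ℝ) 1 ∧ v + 1 - α2 / α1 ∈ Icc (0:ℝ) 1 := by
  have hα1 : 0 < α1 := hα2.trans_le hα12
  have hv' : α1 * v ≤ α2 := by rw [mul_comm]; exact (le_div_iff₀ hα1).mp hv.2
  exact ⟨⟨by have := hv.1; positivity, (div_le_one hα2).mpr hv'⟩,
    ⟨by linarith [hv.1, (div_le_one hα1).mpr hα12], by linarith [hv.2]⟩⟩

variable (hα2 : 0 < α2) (hα12 : α2 ≤ α1)
include hα2 hα12

lemma intervalIntegrable_pairedPower (hp1 : IntervalIntegrable p1 volume 0 1)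
    (hp2 : IntervalIntegrable p2 volume 0 1) :
    IntervalIntegrable (pairedPower α1 α2 p1 p2) volume 0 (α2 / α1) := by
  have hα1 : 0 < α1 := hα2.trans_le hα12
  exact (((hp1.comp_mul_div α1 α2).const_mul α1).add
    ((hp2.comp_add_one_sub_s19 (by positivity) ((div_le_one hα1).mpr hα12)).const_mul α2)).div_const α2

lemma integral_add_integral_eq_pairedPower (hp1 : IntervalIntegrable p1 volume 0 1)
    (hp2 : IntervalIntegrable p2 volume 0 1) :
    (∫ x in (0:ℝ)..1, p1 x) + ∫ x in (0:ℝ)..1, p2 x =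
      (∫ y in (0:ℝ)..(1 - α2 / α1), p2 y) + ∫ v in (0:ℝ)..(α2 / α1), pairedPower α1 α2 p1 p2 v := by
  have hα1 : 0 < α1 := hα2.trans_le hα12
  have hc0 : 0 ≤ α2 / α1 := by positivity
  have hc1 : α2 / α1 ≤ 1 := (div_le_one hα1).mpr hα12
  have h1 : ∫ v in (0:ℝ)..(α2 / α1), p1 (α1 * v / α2) = α2 / α1 * ∫ x in (0:ℝ)..1, p1 x := by
    simp_rw [← div_mul_eq_mul_div]
    rw [intervalIntegral.integral_comp_mul_left p1 (by positivity), mul_zero, inv_div,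
      show α1 / α2 * (α2 / α1) = 1 by field_simp, smul_eq_mul]
  have h2 : ∫ v in (0:ℝ)..(α2 / α1), p2 (v + 1 - α2 / α1) = ∫ y in (1 - α2 / α1)..1, p2 y := by
    simp_rw [add_sub_assoc]
    rw [intervalIntegral.integral_comp_add_right, zero_add, add_sub_cancel]
  have hmid : 1 - α2 / α1 ∈ uIcc (0:ℝ) 1 := Icc_subset_uIcc ⟨by linarith, by linarith⟩
  have hsplit := intervalIntegral.integral_add_adjacent_intervals
    (hp2.mono_set (uIcc_subset_uIcc left_mem_uIcc hmid))
    (hp2.mono_set (uIcc_subset_uIcc hmid right_mem_uIcc))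
  unfold pairedPower
  rw [intervalIntegral.integral_div, intervalIntegral.integral_add
    ((hp1.comp_mul_div α1 α2).const_mul α1) ((hp2.comp_add_one_sub_s19 hc0 hc1).const_mul α2),
    intervalIntegral.integral_const_mul, intervalIntegral.integral_const_mul, h1, h2, ← hsplit]
  field_simp
  ring

lemma integral_add_integral_le_of_pairedPower_le {q1 q2 : ℝ → ℝ}
    (hp1 : IntervalIntegrable p1 volume 0 1) (hp2 : IntervalIntegrable p2 volume 0 1)
    (hq1 : IntervalIntegrable q1 volume 0 1) (hq2 : IntervalIntegrable q2 volume 0 1)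
    (h2 : ∀ y ∈ Icc 0 (1 - α2 / α1), p2 y ≤ q2 y)
    (h12 : ∀ v ∈ Icc 0 (α2 / α1), pairedPower α1 α2 p1 p2 v ≤ pairedPower α1 α2 q1 q2 v) :
    (∫ x in (0:ℝ)..1, p1 x) + ∫ x in (0:ℝ)..1, p2 x ≤
      (∫ x in (0:ℝ)..1, q1 x) + ∫ x in (0:ℝ)..1, q2 x := by
  have hα1 : 0 < α1 := hα2.trans_le hα12
  have hc1 : α2 / α1 ≤ 1 := (div_le_one hα1).mpr hα12
  have hc0 : 0 ≤ α2 / α1 := by positivity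
  have hsub : uIcc 0 (1 - α2 / α1) ⊆ uIcc (0:ℝ) 1 :=
    uIcc_subset_uIcc left_mem_uIcc (Icc_subset_uIcc ⟨by linarith, by linarith⟩)
  rw [integral_add_integral_eq_pairedPower hα2 hα12 hp1 hp2,
    integral_add_integral_eq_pairedPower hα2 hα12 hq1 hq2]
  exact add_le_add
    (intervalIntegral.integral_mono_on (by linarith) (hp2.mono_set hsub) (hq2.mono_set hsub) h2)
    (intervalIntegral.integral_mono_on hc0
      (intervalIntegrable_pairedPower hα2 hα12 hp1 hp2)
      (intervalIntegrable_pairedPower hα2 hα12 hq1 hq2) h12)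

end Pairing

lemma exists_outageFree_pairedPower_eq {α1 α2 : ℝ} (hα2 : 0 < α2) (hα12 : α2 ≤ α1)
    {b1 b2 : ℝ → ℝ} (hb1 : MonotoneOn b1 (Icc 0 1)) (hb2 : MonotoneOn b2 (Icc 0 1))
    (hb1nn : ∀ x ∈ Icc (0:ℝ) 1, 0 ≤ b1 x) (hb2nn : ∀ y ∈ Icc (0:ℝ) 1, 0 ≤ b2 y) :
    ∃ P1 P2 : ℝ → ℝ,
      (∀ x ∈ Icc (0:ℝ) 1, 0 ≤ P1 (b1 x)) ∧
      (∀ x ∈ Icc (0:ℝ) 1, 0 ≤ P2 (b2 x)) ∧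
      (∀ x ∈ Icc (0:ℝ) 1, α1 * P1 (b1 x) ≥ (2:ℝ) ^ (2 * b1 x) - 1) ∧
      (∀ x ∈ Icc (0:ℝ) 1, α2 * P2 (b2 x) ≥ (2:ℝ) ^ (2 * b2 x) - 1) ∧
      (∀ x ∈ Icc (0:ℝ) 1, ∀ y ∈ Icc (0:ℝ) 1,
        α1 * P1 (b1 x) + α2 * P2 (b2 y) ≥ (2:ℝ) ^ (2 * (b1 x + b2 y)) - 1) ∧
      IntervalIntegrable (fun x => P1 (b1 x)) volume 0 1 ∧
      IntervalIntegrable (fun x => P2 (b2 x)) volume 0 1 ∧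
      (∀ y ∈ Icc 0 (1 - α2 / α1), P2 (b2 y) = ((2:ℝ) ^ (2 * b2 y) - 1) / α2) ∧
      (∀ v ∈ Icc 0 (α2 / α1),
        pairedPower α1 α2 (fun x => P1 (b1 x)) (fun y => P2 (b2 y)) v =
          ((2:ℝ) ^ (2 * (b2 (v + 1 - α2 / α1) + b1 (α1 * v / α2))) - 1) / α2) := by
  have hα1 : 0 < α1 := hα2.trans_le hα12
  obtain ⟨q1, q2, hq1int, hq2int, hq1, hq2, hq12, htight₂, htight₁₂⟩ :=
    exists_receivedPowers_tight (div_pos hα2 hα1) ((div_le_one hα1).mpr hα12) hb1 hb2 hb1nn hb2nn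
  have hP1 : ∀ r, α1 * (q1 r / α1) = q1 r := fun r => mul_div_cancel₀ _ hα1.ne'
  have hP2 : ∀ r, α2 * (q2 r / α2) = q2 r := fun r => mul_div_cancel₀ _ hα2.ne'
  refine ⟨fun r => q1 r / α1, fun r => q2 r / α2, fun x hx => ?_, fun y hy => ?_,
    fun x hx => ?_, fun y hy => ?_, fun x hx y hy => ?_, ?_, ?_,
    fun y hy => congrArg (· / α2) (htight₂ y hy), fun v hv => ?_⟩
  · exact div_nonneg ((sub_nonneg.mpr (Real.one_le_rpow one_le_two
      (by linarith [hb1nn x hx]))).trans (hq1 x hx)) hα1.le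
  · exact div_nonneg ((sub_nonneg.mpr (Real.one_le_rpow one_le_two
      (by linarith [hb2nn y hy]))).trans (hq2 y hy)) hα2.le
  · simpa only [hP1] using hq1 x hx
  · simpa only [hP2] using hq2 y hy
  · simpa only [hP1, hP2] using hq12 x hx y hy
  · exact hq1int.div_const α1
  · exact hq2int.div_const α2
  · have hpair : α2 / α1 * (α1 * v / α2) + (1 - α2 / α1) = v + 1 - α2 / α1 := by
      field_simp
      ring
    have := htight₁₂ _ (pairing_mem_Icc hα2 hα12 hv).1
    rw [hpair, add_comm (b1 _)] at this
    simp only [pairedPower, hP1, hP2, this]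

theorem min_avg_sum_power_unit_delay
    (α1 α2 : ℝ) (hα2 : 0 < α2) (hα12 : α2 ≤ α1)
    (b1 b2 : ℝ → ℝ)
    (hb1mono : MonotoneOn b1 (Set.Icc 0 1)) (hb2mono : MonotoneOn b2 (Set.Icc 0 1))
    (hb1nn : ∀ x ∈ Set.Icc (0:ℝ) 1, 0 ≤ b1 x)
    (hb2nn : ∀ x ∈ Set.Icc (0:ℝ) 1, 0 ≤ b2 x) :
    IsLeast
      { s : ℝ | ∃ P1 P2 : ℝ → ℝ,
          (∀ x ∈ Set.Icc (0:ℝ) 1, 0 ≤ P1 (b1 x)) ∧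
          (∀ x ∈ Set.Icc (0:ℝ) 1, 0 ≤ P2 (b2 x)) ∧
          (∀ x ∈ Set.Icc (0:ℝ) 1, α1 * P1 (b1 x) ≥ (2:ℝ) ^ (2 * b1 x) - 1) ∧
          (∀ x ∈ Set.Icc (0:ℝ) 1, α2 * P2 (b2 x) ≥ (2:ℝ) ^ (2 * b2 x) - 1) ∧
          (∀ x ∈ Set.Icc (0:ℝ) 1, ∀ y ∈ Set.Icc (0:ℝ) 1,
            α1 * P1 (b1 x) + α2 * P2 (b2 y) ≥ (2:ℝ) ^ (2 * (b1 x + b2 y)) - 1) ∧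
          IntervalIntegrable (fun x => P1 (b1 x)) volume 0 1 ∧
          IntervalIntegrable (fun x => P2 (b2 x)) volume 0 1 ∧
          s = (∫ x in (0:ℝ)..1, P1 (b1 x)) + ∫ x in (0:ℝ)..1, P2 (b2 x) }
      ((∫ x in (0:ℝ)..(1 - α2 / α1), ((2:ℝ) ^ (2 * b2 x) - 1) / α2)
        + ∫ v in (0:ℝ)..(α2 / α1),
            ((2:ℝ) ^ (2 * (b2 (v + 1 - α2 / α1) + b1 (α1 * v / α2))) - 1) / α2) := by
  obtain ⟨P1, P2, h1, h2, h3, h4, h12, hP1int, hP2int, htight₂, htight₁₂⟩ :=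
    exists_outageFree_pairedPower_eq hα2 hα12 hb1mono hb2mono hb1nn hb2nn
  have hc : 0 ≤ α2 / α1 := div_nonneg hα2.le (hα2.le.trans hα12)
  have hc' : 0 ≤ 1 - α2 / α1 := sub_nonneg.mpr ((div_le_one (hα2.trans_le hα12)).mpr hα12)
  have hopt : (∫ x in (0:ℝ)..1, P1 (b1 x)) + ∫ x in (0:ℝ)..1, P2 (b2 x) =
      (∫ x in (0:ℝ)..(1 - α2 / α1), ((2:ℝ) ^ (2 * b2 x) - 1) / α2) +
        ∫ v in (0:ℝ)..(α2 / α1),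
          ((2:ℝ) ^ (2 * (b2 (v + 1 - α2 / α1) + b1 (α1 * v / α2))) - 1) / α2 := by
    rw [integral_add_integral_eq_pairedPower hα2 hα12 hP1int hP2int]
    congr 1 <;> refine intervalIntegral.integral_congr fun y hy => ?_
    · exact htight₂ y (uIcc_of_le hc' ▸ hy)
    · exact htight₁₂ y (uIcc_of_le hc ▸ hy)
  refine ⟨⟨P1, P2, h1, h2, h3, h4, h12, hP1int, hP2int, hopt.symm⟩, ?_⟩
  rintro _ ⟨Q1, Q2, -, -, -, hQ2, hQ12, hQ1int, hQ2int, rfl⟩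
  rw [← hopt]
  refine integral_add_integral_le_of_pairedPower_le hα2 hα12 hP1int hP2int hQ1int hQ2int
    (fun y hy => ?_) (fun v hv => ?_)
  · rw [htight₂ y hy, div_le_iff₀' hα2]
    exact hQ2 y ⟨hy.1, hy.2.trans (by linarith)⟩
  · obtain ⟨hx, hy⟩ := pairing_mem_Icc hα2 hα12 hv
    rw [htight₁₂ v hv, add_comm]
    exact div_le_div_of_nonneg_right (hQ12 _ hx _ hy) hα2.le
end
end
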